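/- Let G be a finite simple graph and A a critical independent set of G. Then A = ker(G) if and only if there is no nonempty set B ⊆ N(A) such that |N(B) ∩ A| = |B|. -/
import Mathlib


open Finset

set_option linter.unusedSectionVars false

namespace CritGraph

variable {V : Type*} [Fintype V] [DecidableEq V]

/-- The neighborhood of a set of vertices `X`:
all vertices having at least one neighbor in `X`. -/
def nbhd (G : SimpleGraph V) [DecidableRel G.Adj] (X : Finset V) : Finset V :=
  univ.filter fun v => ∃ x ∈ X, G.Adj v x

/-- The difference `d(X) = |X| - |N(X)|` of a set of vertices `X`. -/
def diff (G : SimpleGraph V) [DecidableRel G.Adj] (X : Finset V) : ℤ :=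
  (X.card : ℤ) - ((nbhd G X).card : ℤ)

/-- A set of vertices is independent if no two of its vertices are adjacent. -/
def IsIndep (G : SimpleGraph V) (S : Finset V) : Prop :=
  ∀ u ∈ S, ∀ v ∈ S, ¬ G.Adj u v

instance (G : SimpleGraph V) [DecidableRel G.Adj] : DecidablePred (IsIndep G) := fun S =>
  inferInstanceAs (Decidable (∀ u ∈ S, ∀ v ∈ S, ¬ G.Adj u v))

/-- The critical difference `d_c(G) = max {d(X) : X ⊆ V}`. -/
def dC (G : SimpleGraph V) [DecidableRel G.Adj] : ℤ :=
  (univ : Finset V).powerset.sup' (Finset.powerset_nonempty _) (diff G)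

/-- The critical independence difference `id_c(G) = max {d(I) : I independent}`. -/
def idC (G : SimpleGraph V) [DecidableRel G.Adj] : ℤ :=
  ((univ : Finset V).powerset.filter (IsIndep G)).sup'
    ⟨∅, by simp [IsIndep]⟩ (diff G)

/-- `A` is a critical independent set: `A` is independent and
`d(A) = max {d(I) : I independent}`. -/
def IsCritIndep (G : SimpleGraph V) [DecidableRel G.Adj] (A : Finset V) : Prop :=
  IsIndep G A ∧ ∀ I : Finset V, IsIndep G I → diff G I ≤ diff G A

instance (G : SimpleGraph V) [DecidableRel G.Adj] : DecidablePred (IsCritIndep G) := fun A =>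
  inferInstanceAs (Decidable (IsIndep G A ∧ ∀ I : Finset V, IsIndep G I → diff G I ≤ diff G A))

/-- `ker(G)`: the intersection of all critical independent sets of `G`. -/
def kerG (G : SimpleGraph V) [DecidableRel G.Adj] : Finset V :=
  univ.filter fun v => ∀ A : Finset V, IsCritIndep G A → v ∈ A

/-- `G - v`: the induced subgraph of `G` on `V \ {v}`. -/
def deleteVert (G : SimpleGraph V) (v : V) : SimpleGraph {u : V // u ≠ v} :=
  G.comap Subtype.val

instance (G : SimpleGraph V) (v : V) [DecidableRel G.Adj] :
    DecidableRel (deleteVert G v).Adj := fun a b =>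
  inferInstanceAs (Decidable (G.Adj a.val b.val))

/-- `S` is an inclusion-minimal independent set with positive difference. -/
def MinPosIndep (G : SimpleGraph V) [DecidableRel G.Adj] (S : Finset V) : Prop :=
  IsIndep G S ∧ 0 < diff G S ∧ ∀ S' ⊂ S, ¬ (IsIndep G S' ∧ 0 < diff G S')

/-- `S` is a maximum independent set. -/
def IsMaxIndep (G : SimpleGraph V) (S : Finset V) : Prop :=
  IsIndep G S ∧ ∀ I : Finset V, IsIndep G I → I.card ≤ S.card

instance (G : SimpleGraph V) [DecidableRel G.Adj] : DecidablePred (IsMaxIndep G) := fun S =>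
  inferInstanceAs (Decidable (IsIndep G S ∧ ∀ I : Finset V, IsIndep G I → I.card ≤ S.card))

/-- `core(G)`: the intersection of all maximum independent sets of `G`. -/
def coreG (G : SimpleGraph V) [DecidableRel G.Adj] : Finset V :=
  univ.filter fun v => ∀ A : Finset V, IsMaxIndep G A → v ∈ A


section Aux

variable (G : SimpleGraph V) [DecidableRel G.Adj]

lemma mem_nbhd' {X : Finset V} {v : V} : v ∈ nbhd G X ↔ ∃ x ∈ X, G.Adj v x := by
  simp [nbhd]

lemma nbhd_mono' {X Y : Finset V} (h : X ⊆ Y) : nbhd G X ⊆ nbhd G Y := by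
  intro v hv
  rw [mem_nbhd'] at hv ⊢
  obtain ⟨x, hx, ha⟩ := hv
  exact ⟨x, h hx, ha⟩

lemma indep_mono {A S : Finset V} (hA : IsIndep G A) (h : S ⊆ A) : IsIndep G S :=
  fun u hu v hv => hA u (h hu) v (h hv)

lemma nbhd_sdiff_subset {A B : Finset V} :
    nbhd G (A \ nbhd G B) ⊆ nbhd G A \ B := by
  intro v hv
  rw [mem_nbhd'] at hv
  obtain ⟨a, ha, hadj⟩ := hv
  rw [mem_sdiff] at ha
  rw [mem_sdiff, mem_nbhd']
  refine ⟨⟨a, ha.1, hadj⟩, fun hvB => ha.2 ?_⟩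
  rw [mem_nbhd']
  exact ⟨v, hvB, hadj.symm⟩

/-- Key inequality: `d(A \ N(B)) ≥ d(A) + |B| - |N(B) ∩ A|` when `B ⊆ N(A)`. -/
lemma key {A B : Finset V} (hB : B ⊆ nbhd G A) :
    diff G A + (B.card : ℤ) - ((nbhd G B ∩ A).card : ℤ) ≤ diff G (A \ nbhd G B) := by
  have h1 : (A \ nbhd G B).card + (nbhd G B ∩ A).card = A.card := by
    rw [inter_comm]; exact Finset.card_sdiff_add_card_inter A (nbhd G B)
  have h2 : (nbhd G (A \ nbhd G B)).card + B.card ≤ (nbhd G A).card := by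
    have h3 := Finset.card_le_card (nbhd_sdiff_subset G (A := A) (B := B))
    have h4 := Finset.card_sdiff_add_card_eq_card hB
    omega
  simp only [diff]
  omega

/-- Hall's condition for a critical independent set. -/
lemma hall {A B : Finset V} (hA : IsCritIndep G A) (hB : B ⊆ nbhd G A) :
    B.card ≤ (nbhd G B ∩ A).card := by
  have h := key G hB
  have h2 := hA.2 _ (indep_mono G hA.1 (sdiff_subset (s := A) (t := nbhd G B)))
  omega

lemma crit_sdiff {A B : Finset V} (hA : IsCritIndep G A) (hB : B ⊆ nbhd G A)
    (ht : (nbhd G B ∩ A).card = B.card) : IsCritIndep G (A \ nbhd G B) := by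
  refine ⟨indep_mono G hA.1 sdiff_subset, fun I hI => ?_⟩
  have h := key G hB
  have h2 := hA.2 I hI
  omega

lemma kerG_subset {A : Finset V} (hA : IsCritIndep G A) : kerG G ⊆ A := by
  intro v hv
  rw [kerG, mem_filter] at hv
  exact hv.2 A hA

/-- The intersection of two critical independent sets is critical independent. -/
lemma crit_inter {A A' : Finset V} (hA : IsCritIndep G A) (hA' : IsCritIndep G A') :
    diff G A ≤ diff G (A ∩ A') := by
  set K := A ∩ A' with hKdef
  set D1 := (A \ A') ∩ nbhd G A' with hD1def
  set D2 := (A \ A') \ nbhd G A' with hD2def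
  set S1 := nbhd G D1 ∩ A' with hS1def
  set S2 := nbhd G D2 \ nbhd G A' with hS2def
  -- Hall for A' applied to D1
  have hD1sub : D1 ⊆ nbhd G A' := inter_subset_right
  have hS1 : D1.card ≤ S1.card := hall G hA' hD1sub
  -- A' ∪ D2 is independent
  have hD2A : D2 ⊆ A := (sdiff_subset).trans sdiff_subset
  have hind : IsIndep G (A' ∪ D2) := by
    intro u hu w hw hadj
    rw [mem_union] at hu hw
    rcases hu with hu | hu <;> rcases hw with hw | hw
    · exact hA'.1 u hu w hw hadj
    · rw [hD2def, mem_sdiff] at hw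
      exact hw.2 ((mem_nbhd' G).mpr ⟨u, hu, hadj.symm⟩)
    · rw [hD2def, mem_sdiff] at hu
      exact hu.2 ((mem_nbhd' G).mpr ⟨w, hw, hadj⟩)
    · exact hA.1 u (hD2A hu) w (hD2A hw) hadj
  -- from criticality of A' : |D2| ≤ |S2|
  have hS2 : D2.card ≤ S2.card := by
    have hdisj : Disjoint A' D2 := by
      rw [Finset.disjoint_right]
      intro x hx
      rw [hD2def, mem_sdiff, mem_sdiff] at hx
      exact hx.1.2
    have hcard : (A' ∪ D2).card = A'.card + D2.card :=
      Finset.card_union_of_disjoint hdisj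
    have hnb : nbhd G (A' ∪ D2) ⊆ nbhd G A' ∪ S2 := by
      intro v hv
      rw [mem_nbhd'] at hv
      obtain ⟨x, hx, hadj⟩ := hv
      rw [mem_union] at hx
      rcases hx with hx | hx
      · exact mem_union_left _ ((mem_nbhd' G).mpr ⟨x, hx, hadj⟩)
      · by_cases hv' : v ∈ nbhd G A'
        · exact mem_union_left _ hv'
        · exact mem_union_right _ (by rw [hS2def, mem_sdiff]
                                      exact ⟨(mem_nbhd' G).mpr ⟨x, hx, hadj⟩, hv'⟩)
    have hnbc : (nbhd G (A' ∪ D2)).card ≤ (nbhd G A').card + S2.card :=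
      le_trans (Finset.card_le_card hnb) (Finset.card_union_le _ _)
    have hle := hA'.2 _ hind
    simp only [diff] at hle ⊢
    omega
  -- S1 and S2 are disjoint
  have hdisj12 : Disjoint S1 S2 := by
    rw [Finset.disjoint_left]
    intro x hx1 hx2
    rw [hS1def, mem_inter] at hx1
    rw [hS2def, mem_sdiff, mem_nbhd'] at hx2
    obtain ⟨⟨d, hd, hadj⟩, _⟩ := hx2
    rw [hD2def, mem_sdiff] at hd
    exact hd.2 ((mem_nbhd' G).mpr ⟨x, hx1.2, hadj.symm⟩)
  -- S1 ∪ S2 ⊆ nbhd A \ nbhd K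
  have hsub : S1 ∪ S2 ⊆ nbhd G A \ nbhd G K := by
    intro x hx
    rw [mem_union] at hx
    rw [mem_sdiff]
    rcases hx with hx | hx
    · rw [hS1def, mem_inter] at hx
      constructor
      · exact nbhd_mono' G (hD1def ▸ inter_subset_left.trans sdiff_subset) hx.1
      · intro hxK
        rw [mem_nbhd'] at hxK
        obtain ⟨k, hk, hadj⟩ := hxK
        rw [hKdef, mem_inter] at hk
        exact hA'.1 x hx.2 k hk.2 hadj
    · rw [hS2def, mem_sdiff] at hx
      refine ⟨nbhd_mono' G hD2A hx.1, fun hxK => hx.2 ?_⟩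
      exact nbhd_mono' G (hKdef ▸ inter_subset_right) hxK
  have hcard12 : S1.card + S2.card ≤ (nbhd G A \ nbhd G K).card := by
    rw [← Finset.card_union_of_disjoint hdisj12]
    exact Finset.card_le_card hsub
  -- cardinal bookkeeping
  have hNK : nbhd G K ⊆ nbhd G A := nbhd_mono' G inter_subset_left
  have hNKc : (nbhd G A \ nbhd G K).card + (nbhd G K).card = (nbhd G A).card :=
    Finset.card_sdiff_add_card_eq_card hNK
  have hKD : K.card + (A \ A').card = A.card := by
    rw [hKdef, add_comm]; exact Finset.card_sdiff_add_card_inter A A'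
  have hD12 : D2.card + D1.card = (A \ A').card := by
    rw [hD1def, hD2def]; exact Finset.card_sdiff_add_card_inter _ _
  simp only [diff]
  omega

end Aux

/-- A critical independent set `A` equals `ker(G)` iff there is no nonempty set
`B ⊆ N(A)` with `|N(B) ∩ A| = |B|`. -/
theorem eq_kerG_iff_no_tight_set (G : SimpleGraph V) [DecidableRel G.Adj]
    (A : Finset V) (hA : IsCritIndep G A) :
    A = kerG G ↔
      ¬ ∃ B : Finset V, B ⊆ nbhd G A ∧ B.Nonempty ∧ (nbhd G B ∩ A).card = B.card := by
  constructor
  · rintro rfl ⟨B, hB, hBne, ht⟩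
    have hcrit := crit_sdiff G hA hB ht
    obtain ⟨w, hw⟩ : (nbhd G B ∩ kerG G).Nonempty := by
      rw [← card_pos, ht]; exact hBne.card_pos
    rw [mem_inter] at hw
    have hker := hw.2
    rw [kerG, mem_filter] at hker
    have hw' := hker.2 _ hcrit
    rw [mem_sdiff] at hw'
    exact hw'.2 hw.1
  · intro hno
    have hker : kerG G ⊆ A := kerG_subset G hA
    by_contra hne
    obtain ⟨v, hvA, hvk⟩ : ∃ v ∈ A, v ∉ kerG G := by
      by_contra h
      push_neg at h
      exact hne (Finset.Subset.antisymm h hker)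
    rw [kerG, mem_filter] at hvk
    push_neg at hvk
    obtain ⟨A', hA', hvA'⟩ := hvk (mem_univ v)
    set K := A ∩ A' with hKdef
    have hKind : IsIndep G K := indep_mono G hA.1 inter_subset_left
    have hdK : diff G K = diff G A := le_antisymm (hA.2 K hKind) (crit_inter G hA hA')
    set B := nbhd G A \ nbhd G K with hBdef
    apply hno
    have hNK : nbhd G K ⊆ nbhd G A := nbhd_mono' G inter_subset_left
    have hNKc : B.card + (nbhd G K).card = (nbhd G A).card :=
      Finset.card_sdiff_add_card_eq_card hNK
    have hKA : K ⊆ A := inter_subset_left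
    have hKlt : K.card < A.card := by
      refine Finset.card_lt_card ⟨hKA, fun h => ?_⟩
      have := h hvA
      rw [hKdef, mem_inter] at this
      exact hvA' this.2
    have hKAc : K.card + (A \ K).card = A.card := by
      rw [add_comm]; exact Finset.card_sdiff_add_card_eq_card hKA
    have hBcard : B.card = A.card - K.card := by
      have := hdK
      simp only [diff] at this
      omega
    refine ⟨B, sdiff_subset, ?_, ?_⟩
    · rw [← card_pos]; omega
    · -- tightness
      have hge : B.card ≤ (nbhd G B ∩ A).card := hall G hA sdiff_subset
      have hsub : nbhd G B ∩ A ⊆ A \ K := by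
        intro a ha
        rw [mem_inter, mem_nbhd'] at ha
        obtain ⟨⟨b, hb, hadj⟩, haA⟩ := ha
        rw [mem_sdiff]
        refine ⟨haA, fun haK => ?_⟩
        rw [hBdef, mem_sdiff] at hb
        exact hb.2 ((mem_nbhd' G).mpr ⟨a, haK, hadj.symm⟩)
      have hle : (nbhd G B ∩ A).card ≤ (A \ K).card := Finset.card_le_card hsub
      omega

end CritGraph
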